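/- arXiv:2510.12027 — 2 statements merged into one kernel-verified Lean document; each statement's English description precedes it below -/
import Mathlib

section
/- (Bounded difference / McDiarmid inequality) Let (Ω, 𝒜) be a measurable space, N ≥ 1, and let F : Ω^N → ℝ be a measurable function for which there exist nonnegative constants a_1, ..., a_N with Σ_{j=1}^N a_j² > 0 such that |F(x_1, ..., x_j, ..., x_N) - F(x_1, ..., x_j', ..., x_N)| ≤ a_j for every index 1 ≤ j ≤ N and all points x_1, ..., x_N, x_j' ∈ Ω. Let X_1, ..., X_N be independent Ω-valued random variables on a probability space (ω, 𝔽, ℙ). Then for every ε > 0, ℙ( |F(X_1, ..., X_N) - E[F(X_1, ..., X_N)]| ≥ ε ) ≤ 2 exp( -2ε² / Σ_{j=1}^N a_j² ). -/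
/-!
Write `F - 𝔼 F` as the sum of the martingale differences obtained by integrating out the
coordinates one at a time. Conditionally on the other coordinates, the `j`-th difference moves
in an interval of length `a j`, so by Hoeffding's lemma it is sub-Gaussian with parameter
`a j ^ 2 / 4`; Fubini makes the parameters add up to `c = ∑ j, a j ^ 2 / 4`, and the Chernoff
bound `exp (-ε ^ 2 / (2 * c))` on each tail is the claimed `exp (-2 * ε ^ 2 / ∑ j, a j ^ 2)`.
-/

open MeasureTheory ProbabilityTheory Real
open scoped NNReal

lemma mem_Icc_iInf_add_of_abs_sub_le {α : Type*} [Nonempty α] {f : α → ℝ} {L : ℝ}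
    (hosc : ∀ x x', |f x - f x'| ≤ L) (x : α) :
    f x ∈ Set.Icc (⨅ x, f x) ((⨅ x, f x) + L) := by
  obtain ⟨x₀⟩ := ‹Nonempty α›
  have hbdd : BddBelow (Set.range f) :=
    ⟨f x₀ - L, by rintro _ ⟨x', rfl⟩; linarith [(abs_le.1 (hosc x₀ x')).2]⟩
  refine ⟨ciInf_le hbdd x, ?_⟩
  have : f x - L ≤ ⨅ x, f x := le_ciInf fun x' => by linarith [(abs_le.1 (hosc x x')).2]
  linarith

section Oscillation

variable {α : Type*} [MeasurableSpace α] {μ : Measure α} [IsProbabilityMeasure μ]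
  {f : α → ℝ} {L : ℝ}

lemma integrable_of_abs_sub_le (hf : AEMeasurable f μ) (hosc : ∀ x x', |f x - f x'| ≤ L) :
    Integrable f μ :=
  have := nonempty_of_isProbabilityMeasure μ
  .of_mem_Icc _ _ hf (.of_forall (mem_Icc_iInf_add_of_abs_sub_le hosc))

lemma abs_sub_integral_le_of_abs_sub_le (hf : AEMeasurable f μ)
    (hosc : ∀ x x', |f x - f x'| ≤ L) (x : α) : |f x - ∫ x', f x' ∂μ| ≤ L := by
  have h : f x - ∫ x', f x' ∂μ = ∫ x', (f x - f x') ∂μ := by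
    rw [integral_sub (integrable_const _) (integrable_of_abs_sub_le hf hosc), integral_const,
      probReal_univ, one_smul]
  simpa [h] using norm_integral_le_of_norm_le_const (μ := μ)
    (.of_forall fun x' => (hosc x x').trans_eq' (norm_eq_abs _).symm)

lemma hasSubgaussianMGF_of_abs_sub_le (hf : AEMeasurable f μ)
    (hosc : ∀ x x', |f x - f x'| ≤ L) :
    HasSubgaussianMGF (fun x => f x - ∫ x, f x ∂μ) ((‖L‖₊ / 2) ^ 2) μ := by
  have := nonempty_of_isProbabilityMeasure μ
  simpa using hasSubgaussianMGF_of_mem_Icc hf (.of_forall (mem_Icc_iInf_add_of_abs_sub_le hosc))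

end Oscillation

section Prod

variable {α β : Type*} [MeasurableSpace α] [MeasurableSpace β] {μ : Measure α} {ν : Measure β}
  [IsProbabilityMeasure μ] [IsProbabilityMeasure ν] {G : α × β → ℝ} {L m : ℝ} {c : ℝ≥0}

lemma hasSubgaussianMGF_prod_of_abs_sub_le (hG : Measurable G)
    (hosc : ∀ x x' y, |G (x, y) - G (x', y)| ≤ L)
    (hg : HasSubgaussianMGF (fun y => ∫ x, G (x, y) ∂μ - m) c ν) :
    HasSubgaussianMGF (fun z => G z - m) ((‖L‖₊ / 2) ^ 2 + c) (μ.prod ν) := by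
  set g : β → ℝ := fun y => ∫ x, G (x, y) ∂μ
  set cL : ℝ≥0 := (‖L‖₊ / 2) ^ 2
  have hsec (y : β) : AEMeasurable (fun x => G (x, y)) μ :=
    (hG.comp measurable_prodMk_right).aemeasurable
  have hdev (z : α × β) : |G z - g z.2| ≤ L :=
    abs_sub_integral_le_of_abs_sub_le (hsec z.2) (hosc · · z.2) z.1
  have hsplit (t : ℝ) (z : α × β) :
      exp (t * (G z - m)) = exp (t * (G z - g z.2)) * exp (t * (g z.2 - m)) := by
    rw [← exp_add]; ring_nf
  have hint (t : ℝ) : Integrable (fun z => exp (t * (G z - m))) (μ.prod ν) := by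
    simp_rw [hsplit t]
    refine ((hg.integrable_exp_mul t).comp_snd μ).bdd_mul (c := exp (|t| * L)) ?_
      (.of_forall fun z => ?_)
    · have hgm : Measurable g := hG.stronglyMeasurable.integral_prod_left'.measurable
      fun_prop
    · rw [norm_of_nonneg (exp_pos _).le, exp_le_exp]
      calc t * (G z - g z.2) ≤ |t| * |G z - g z.2| := by rw [← abs_mul]; exact le_abs_self _
        _ ≤ |t| * L := by gcongr; exact hdev z
  refine ⟨hint, fun t => ?_⟩
  calc mgf (fun z => G z - m) (μ.prod ν) t
      = ∫ y, mgf (fun x => G (x, y) - g y) μ t * exp (t * (g y - m)) ∂ν := by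
        rw [mgf, integral_prod_symm _ (hint t)]
        simp_rw [hsplit t, mgf, integral_mul_const]
    _ ≤ ∫ y, exp (cL * t ^ 2 / 2) * exp (t * (g y - m)) ∂ν := by
        refine integral_mono_of_nonneg (.of_forall fun y => mul_nonneg mgf_nonneg (exp_pos _).le)
          ((hg.integrable_exp_mul t).const_mul _) (.of_forall fun y =>
            mul_le_mul_of_nonneg_right
              ((hasSubgaussianMGF_of_abs_sub_le (hsec y) (hosc · · y)).mgf_le t) (exp_pos _).le)
    _ = exp (cL * t ^ 2 / 2) * mgf (fun y => g y - m) ν t := integral_const_mul _ _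
    _ ≤ exp (cL * t ^ 2 / 2) * exp (c * t ^ 2 / 2) := by
        gcongr; exact hg.mgf_le t
    _ = exp ((cL + c : ℝ≥0) * t ^ 2 / 2) := by
        rw [← exp_add, NNReal.coe_add, add_mul, add_div]

end Prod

theorem Measurable.finCons {α : Type*} [MeasurableSpace α] {n : ℕ} {A : Fin (n + 1) → Type*}
    [∀ i, MeasurableSpace (A i)] {f : α → A 0} {g : α → ∀ j : Fin n, A j.succ}
    (hf : Measurable f) (hg : Measurable g) : Measurable fun x => Fin.cons (f x) (g x) :=
  measurable_pi_lambda _ fun i => i.cases (by simpa using hf)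
    fun j => by simpa using hg.eval (a := j)

def HasBoundedDifferences {ι Ω : Type*} [DecidableEq ι] (F : (ι → Ω) → ℝ) (a : ι → ℝ) : Prop :=
  ∀ x i y, |F x - F (Function.update x i y)| ≤ a i

namespace HasBoundedDifferences

variable {Ω : Type*} {n : ℕ} {F : (Fin (n + 1) → Ω) → ℝ} {a : Fin (n + 1) → ℝ}

lemma abs_sub_cons_le (hbd : HasBoundedDifferences F a) (x x' : Ω) (y : Fin n → Ω) :
    |F (Fin.cons x y) - F (Fin.cons x' y)| ≤ a 0 := by
  simpa using hbd (Fin.cons x y) 0 x'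

lemma integral_cons [MeasurableSpace Ω] {μ : Measure Ω} [IsProbabilityMeasure μ]
    (hF : Measurable F) (hbd : HasBoundedDifferences F a) :
    HasBoundedDifferences (fun y => ∫ x, F (Fin.cons x y) ∂μ) (fun j => a j.succ) := by
  intro y j z
  have hint (y : Fin n → Ω) : Integrable (fun x => F (Fin.cons x y)) μ :=
    integrable_of_abs_sub_le (hF.comp (measurable_id.finCons measurable_const)).aemeasurable
      (hbd.abs_sub_cons_le · · y)
  rw [← integral_sub (hint y) (hint _)]
  simp_rw [Fin.cons_update]
  simpa using norm_integral_le_of_norm_le_const (μ := μ)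
    (.of_forall fun x => (hbd (Fin.cons x y) j.succ z).trans_eq' (norm_eq_abs _).symm)

end HasBoundedDifferences

theorem hasSubgaussianMGF_pi_of_hasBoundedDifferences {Ω : Type*} [MeasurableSpace Ω] :
    ∀ {N : ℕ} (μ : Fin N → Measure Ω) [∀ i, IsProbabilityMeasure (μ i)]
      {F : (Fin N → Ω) → ℝ} {a : Fin N → ℝ}, Measurable F → HasBoundedDifferences F a →
      HasSubgaussianMGF (fun x => F x - ∫ x, F x ∂Measure.pi μ) (∑ j, (‖a j‖₊ / 2) ^ 2)
        (Measure.pi μ)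
  | 0, μ, _, F, a, _, _ => by
    have hF (x : Fin 0 → Ω) : F x = F default := congrArg F (Subsingleton.elim x _)
    simp [hF]
  | n + 1, μ, _, F, a, hF, hbd => by
    set G : Ω × (Fin n → Ω) → ℝ := fun z => F (Fin.cons z.1 z.2)
    have hG : Measurable G := hF.comp (measurable_fst.finCons measurable_snd)
    have hmp := measurePreserving_piFinSuccAbove μ 0
    simp only [Fin.zero_succAbove] at hmp
    have hcons (x : Fin (n + 1) → Ω) : G (MeasurableEquiv.piFinSuccAbove _ 0 x) = F x := by
      rw [MeasurableEquiv.piFinSuccAbove_apply]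
      exact congrArg F (Fin.cons_self_tail x)
    have htail := hasSubgaussianMGF_pi_of_hasBoundedDifferences (fun j => μ j.succ)
      (hG.stronglyMeasurable.integral_prod_left'.measurable) (hbd.integral_cons (μ := μ 0) hF)
    set m := ∫ y, ∫ x, G (x, y) ∂μ 0 ∂Measure.pi fun j => μ j.succ
    have hstep := hasSubgaussianMGF_prod_of_abs_sub_le (μ := μ 0) hG hbd.abs_sub_cons_le htail
    have hGi : Integrable G ((μ 0).prod (Measure.pi fun j => μ j.succ)) :=
      (hstep.integrable.add (integrable_const m)).congr (.of_forall fun _ => sub_add_cancel _ _)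
    have hmean : ∫ x, F x ∂Measure.pi μ = m := by
      simp_rw [← hcons]
      rw [hmp.integral_comp' G, integral_prod_symm G hGi]
    rw [Fin.sum_univ_succ, hmean]
    convert (hmp.map_eq ▸ hstep).of_map hmp.measurable.aemeasurable using 1
    ext x
    simp only [Function.comp_apply, hcons]

lemma ProbabilityTheory.HasSubgaussianMGF.measureReal_abs_ge_le {Ω : Type*} [MeasurableSpace Ω]
    {μ : Measure Ω} [IsFiniteMeasure μ] {X : Ω → ℝ} {c : ℝ≥0} (h : HasSubgaussianMGF X c μ)
    {ε : ℝ} (hε : 0 ≤ ε) :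
    μ.real {ω | ε ≤ |X ω|} ≤ 2 * exp (-ε ^ 2 / (2 * c)) := by
  have hsplit : {ω | ε ≤ |X ω|} = {ω | ε ≤ X ω} ∪ {ω | ε ≤ (-X) ω} := by
    ext ω; simp [le_abs', le_neg, or_comm]
  calc μ.real {ω | ε ≤ |X ω|}
      ≤ μ.real {ω | ε ≤ X ω} + μ.real {ω | ε ≤ (-X) ω} := hsplit ▸ measureReal_union_le _ _
    _ ≤ exp (-ε ^ 2 / (2 * c)) + exp (-ε ^ 2 / (2 * c)) :=
        add_le_add (h.measure_ge_le hε) (h.neg.measure_ge_le hε)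
    _ = 2 * exp (-ε ^ 2 / (2 * c)) := by ring

theorem mcdiarmid_bounded_difference_general
    {Ω : Type*} [MeasurableSpace Ω]
    {ω : Type*} [MeasurableSpace ω] (P : Measure ω) [IsProbabilityMeasure P]
    (N : ℕ)
    (F : (Fin N → Ω) → ℝ) (hF : Measurable F)
    (a : Fin N → ℝ)
    (hbd : ∀ (x : Fin N → Ω) (j : Fin N) (x' : Ω),
      |F x - F (Function.update x j x')| ≤ a j)
    (X : Fin N → ω → Ω) (hX : ∀ j, Measurable (X j))
    (hindep : iIndepFun X P) :
    ∀ ε > (0 : ℝ),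
      (P {w | ε ≤ |F (fun j => X j w) - ∫ w', F (fun j => X j w') ∂P|}).toReal ≤
        2 * Real.exp (-2 * ε ^ 2 / ∑ j, a j ^ 2) := by
  intro ε hε
  have := fun j => Measure.isProbabilityMeasure_map (μ := P) (hX j).aemeasurable
  have hXvec : Measurable fun w j => X j w := measurable_pi_lambda _ hX
  have hlaw := hindep.map_fun_eq_pi_map fun j => (hX j).aemeasurable
  have hpi := hasSubgaussianMGF_pi_of_hasBoundedDifferences (fun j => P.map (X j)) hF hbd
  rw [← hlaw] at hpi
  have hmean : ∫ w, F (fun j => X j w) ∂P = ∫ x, F x ∂P.map fun w j => X j w :=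
    (integral_map hXvec.aemeasurable hF.aestronglyMeasurable).symm
  have hvar : ((∑ j, (‖a j‖₊ / 2) ^ 2 : ℝ≥0) : ℝ) = (∑ j, a j ^ 2) / 4 := by
    push_cast
    simp_rw [div_pow, norm_eq_abs, sq_abs, Finset.sum_div]
    norm_num
  rw [hmean]
  refine ((hpi.of_map hXvec.aemeasurable).measureReal_abs_ge_le hε.le).trans_eq ?_
  rw [hvar]
  congr 2
  ring

/-- **Bounded difference (McDiarmid) inequality.**
Let `(Ω, 𝒜)` be a measurable space, `N ≥ 1`, and `F : Ω^N → ℝ` a measurable function for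
which there are nonnegative constants `a 1, ..., a N` with `Σ_j (a j)² > 0` such that
changing the `j`-th coordinate changes the value of `F` by at most `a j`.  If
`X 1, ..., X N` are independent `Ω`-valued random variables on a probability space
`(ω, P)`, then for every `ε > 0`,
`P(|F(X₁,...,X_N) - E[F(X₁,...,X_N)]| ≥ ε) ≤ 2 exp(-2ε² / Σ_j (a j)²)`. -/
theorem mcdiarmid_bounded_difference
    {Ω : Type*} [MeasurableSpace Ω]
    {ω : Type*} [MeasurableSpace ω] (P : Measure ω) [IsProbabilityMeasure P]
    (N : ℕ) (hN : 1 ≤ N)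
    (F : (Fin N → Ω) → ℝ) (hF : Measurable F)
    (a : Fin N → ℝ) (ha : ∀ j, 0 ≤ a j) (hsum : 0 < ∑ j, a j ^ 2)
    (hbd : ∀ (x : Fin N → Ω) (j : Fin N) (x' : Ω),
      |F x - F (Function.update x j x')| ≤ a j)
    (X : Fin N → ω → Ω) (hX : ∀ j, Measurable (X j))
    (hindep : iIndepFun X P) :
    ∀ ε > (0 : ℝ),
      (P {w | ε ≤ |F (fun j => X j w) - ∫ w', F (fun j => X j w') ∂P|}).toReal ≤
        2 * Real.exp (-2 * ε ^ 2 / ∑ j, a j ^ 2) :=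
  mcdiarmid_bounded_difference_general P N F hF a hbd X hX hindep
end

section
/- Under the scaled-kernel assumptions, there exist ρ₀ ∈ (0,1) and C > 0, depending only on d and φ, such that the following holds for every ρ ∈ (0, ρ₀), every N ≥ 1, every choice of points x_1, ..., x_N ∈ S^d, and every M > 0: if ε_1, ..., ε_N are independent real random variables with E[ε_j] = 0 and |ε_j| ≤ M almost surely for each j, then E[ ‖ (1/N) Σ_{j=1}^N ε_j φ_ρ(·, x_j) ‖_{L²(ν)} ] ≤ C ρ^{-d/2} N^{-1/2} M. -/
/-!
The normalising constant `Λ_{φ,ρ}` is the same at every point of the sphere (a reflection maps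
any point of the sphere to any other and preserves `ν`), and it is `≳ ρ^d`. For the latter,
`φ > φ(z₀)/2` on a window `(z₀ - ε, z₀ + ε)`, so evaluating `Λ_{φ,ρ}` at a point at distance
`z₀ ρ` from the pole `e₀` bounds it below by `φ(z₀)/2` times the measure of the cap of radius
`ερ` around `e₀`; dropping the first coordinate is `1`-Lipschitz into `(ℝ^d, sup)`, where `μH[d]` is Lebesgue
measure, and maps a cap of radius `r` onto a set containing a cube of side `≍ r/√d`, so caps have
measure `≳ r^d`.

Consequently `∫ φ_ρ(·, x_j)² dν ≤ sup φ / Λ_{φ,ρ} ≲ ρ^{-d}`. Expanding the square of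
`Σ_j ε_j K_j`, the cross terms have zero expectation by independence and centring, so the second
moment of the `L²(ν)` norm is at most `M² Σ_j ‖K_j‖² ≲ M² ρ^{-d} / N`, and Jensen's inequality
for `√` bounds the first moment.
-/

open MeasureTheory ProbabilityTheory

/-- The uniform probability measure `ν = μ/ω_d` on the unit sphere `S^d ⊆ ℝ^(d+1)`, where
`μ` is the `d`-dimensional Hausdorff measure restricted to the sphere and `ω_d = μ(S^d)`. -/
noncomputable def uniformSphereMeasure (d : ℕ) : Measure (EuclideanSpace ℝ (Fin (d + 1))) :=
  (μH[(d : ℝ)] (Metric.sphere (0 : EuclideanSpace ℝ (Fin (d + 1))) 1))⁻¹ •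
    (μH[(d : ℝ)]).restrict (Metric.sphere (0 : EuclideanSpace ℝ (Fin (d + 1))) 1)

/-- The `ν`-normalized scaled zonal kernel
`φ_ρ(x, y) = Λ_{φ,ρ}⁻¹ φ(‖x - y‖/ρ)` with `Λ_{φ,ρ} = ∫ φ(‖x - z‖/ρ) dν(z)`
(independent of `x ∈ S^d` by rotational invariance). -/
noncomputable def scaledZonalKernel (d : ℕ) (φ : ℝ → ℝ) (ρ : ℝ)
    (x y : EuclideanSpace ℝ (Fin (d + 1))) : ℝ :=
  φ (‖x - y‖ / ρ) / ∫ z, φ (‖x - z‖ / ρ) ∂(uniformSphereMeasure d)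

open scoped ENNReal

local notation "𝕊[" d "]" => Metric.sphere (0 : EuclideanSpace ℝ (Fin (d + 1))) (1 : ℝ)

section SecondMoment

variable {ι Y Ω : Type*} [Fintype ι] [MeasurableSpace Y] [MeasurableSpace Ω]
  {ν : Measure Y} {P : Measure Ω}

lemma integral_sq_sum_mul {K : ι → Y → ℝ} (hK : ∀ j, MemLp (K j) 2 ν) (a : ι → ℝ) :
    ∫ y, (∑ j, a j * K j y) ^ 2 ∂ν = ∑ j, ∑ k, a j * a k * ∫ y, K j y * K k y ∂ν := by
  have hKK : ∀ j k, Integrable (fun y => K j y * K k y) ν := fun j k =>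
    (hK j).integrable_mul (hK k)
  have hexpand : ∀ y, (∑ j, a j * K j y) ^ 2 = ∑ j, ∑ k, a j * a k * (K j y * K k y) :=
    fun y => by
      rw [sq, Finset.sum_mul_sum]
      exact Finset.sum_congr rfl fun j _ => Finset.sum_congr rfl fun k _ => by ring
  simp_rw [hexpand, ← integral_const_mul]
  rw [integral_finsetSum _ fun j _ => integrable_finsetSum _ fun k _ => (hKK j k).const_mul _]
  exact Finset.sum_congr rfl fun j _ =>
    integral_finsetSum _ fun k _ => (hKK j k).const_mul _

lemma integral_sum_sum_mul_of_iIndepFun [IsProbabilityMeasure P] {ε : ι → Ω → ℝ}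
    (hmeas : ∀ j, Measurable (ε j)) (hindep : iIndepFun ε P) (hmean : ∀ j, ∫ ω, ε j ω ∂P = 0)
    (hε : ∀ j, MemLp (ε j) 2 P) (c : ι → ι → ℝ) :
    ∫ ω, ∑ j, ∑ k, ε j ω * ε k ω * c j k ∂P = ∑ j, (∫ ω, ε j ω ^ 2 ∂P) * c j j := by
  have hεε : ∀ j k, Integrable (fun ω => ε j ω * ε k ω) P := fun j k =>
    (hε j).integrable_mul (hε k)
  rw [integral_finsetSum _ fun j _ => integrable_finsetSum _ fun k _ => (hεε j k).mul_const _]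
  refine Finset.sum_congr rfl fun j _ => ?_
  rw [integral_finsetSum _ fun k _ => (hεε j k).mul_const _, Finset.sum_eq_single j]
  · rw [integral_mul_const]
    simp_rw [sq]
  · intro k _ hkj
    rw [integral_mul_const, ← Pi.mul_def (ε j) (ε k),
      (hindep.indepFun hkj.symm).integral_mul_eq_mul_integral (hmeas j).aestronglyMeasurable
        (hmeas k).aestronglyMeasurable, hmean j, zero_mul, zero_mul]
  · simp

lemma integral_sqrt_le_sqrt_integral [IsProbabilityMeasure P] {f : Ω → ℝ} (hf : Integrable f P)
    (hf_nonneg : ∀ ω, 0 ≤ f ω) : ∫ ω, √(f ω) ∂P ≤ √(∫ ω, f ω ∂P) := by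
  have hsqrt : Integrable (fun ω => √(f ω)) P :=
    (hf.add (integrable_const 1)).mono' (Real.continuous_sqrt.comp_aestronglyMeasurable hf.1)
      (.of_forall fun ω => by
        rw [Real.norm_of_nonneg (Real.sqrt_nonneg _), Pi.add_apply]
        nlinarith [Real.sq_sqrt (hf_nonneg ω), Real.sqrt_nonneg (f ω)])
  exact Real.strictConcaveOn_sqrt.concaveOn.le_map_integral Real.continuous_sqrt.continuousOn
    isClosed_Ici (.of_forall hf_nonneg) hf hsqrt

lemma integral_sqrt_integral_sq_sum_le [IsProbabilityMeasure P] {K : ι → Y → ℝ}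
    (hK : ∀ j, MemLp (K j) 2 ν) {ε : ι → Ω → ℝ} (hmeas : ∀ j, Measurable (ε j))
    (hindep : iIndepFun ε P) (hmean : ∀ j, ∫ ω, ε j ω ∂P = 0) {M : ℝ} (hM : 0 ≤ M)
    (hbdd : ∀ j, ∀ᵐ ω ∂P, |ε j ω| ≤ M) :
    ∫ ω, √(∫ y, (∑ j, ε j ω * K j y) ^ 2 ∂ν) ∂P ≤ M * √(∑ j, ∫ y, K j y ^ 2 ∂ν) := by
  have hε : ∀ j, MemLp (ε j) 2 P := fun j =>
    MemLp.of_bound (hmeas j).aestronglyMeasurable M (by simpa using hbdd j)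
  have hgram : (fun ω => ∫ y, (∑ j, ε j ω * K j y) ^ 2 ∂ν) =
      fun ω => ∑ j, ∑ k, ε j ω * ε k ω * ∫ y, K j y * K k y ∂ν :=
    funext fun ω => integral_sq_sum_mul hK _
  have hint : Integrable (fun ω => ∫ y, (∑ j, ε j ω * K j y) ^ 2 ∂ν) P := by
    rw [hgram]
    exact integrable_finsetSum _ fun j _ => integrable_finsetSum _ fun k _ =>
      ((hε j).integrable_mul (hε k)).mul_const _
  have hvar : ∀ j, ∫ ω, ε j ω ^ 2 ∂P ≤ M ^ 2 := fun j =>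
    calc ∫ ω, ε j ω ^ 2 ∂P ≤ ∫ _, M ^ 2 ∂P := by
          refine integral_mono_ae (hε j).integrable_sq (integrable_const _) ?_
          filter_upwards [hbdd j] with ω hω
          simpa [sq_abs] using pow_le_pow_left₀ (abs_nonneg _) hω 2
      _ = M ^ 2 := by simp
  have hsecond :
      ∫ ω, ∫ y, (∑ j, ε j ω * K j y) ^ 2 ∂ν ∂P ≤ M ^ 2 * ∑ j, ∫ y, K j y ^ 2 ∂ν := by
    rw [hgram, integral_sum_sum_mul_of_iIndepFun hmeas hindep hmean hε, Finset.mul_sum]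
    refine Finset.sum_le_sum fun j _ => ?_
    simp only [← sq]
    exact mul_le_mul_of_nonneg_right (hvar j) (integral_nonneg fun y => sq_nonneg _)
  calc ∫ ω, √(∫ y, (∑ j, ε j ω * K j y) ^ 2 ∂ν) ∂P
      ≤ √(∫ ω, ∫ y, (∑ j, ε j ω * K j y) ^ 2 ∂ν ∂P) :=
        integral_sqrt_le_sqrt_integral hint fun ω => integral_nonneg fun y => sq_nonneg _
    _ ≤ √(M ^ 2 * ∑ j, ∫ y, K j y ^ 2 ∂ν) := Real.sqrt_le_sqrt hsecond
    _ = M * √(∑ j, ∫ y, K j y ^ 2 ∂ν) := by rw [Real.sqrt_mul (sq_nonneg M), Real.sqrt_sq hM]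

end SecondMoment

section UniformSphereMeasure

variable {d : ℕ}

lemma uniformSphereMeasure_apply {s : Set (EuclideanSpace ℝ (Fin (d + 1)))}
    (hs : MeasurableSet s) :
    uniformSphereMeasure d s = (μH[(d : ℝ)] 𝕊[d])⁻¹ * μH[(d : ℝ)] (s ∩ 𝕊[d]) := by
  rw [uniformSphereMeasure, Measure.smul_apply, Measure.restrict_apply hs, smul_eq_mul]

lemma uniformSphereMeasure_eq_zero_of_hausdorffMeasure_eq_top (h : μH[(d : ℝ)] 𝕊[d] = ⊤) :
    uniformSphereMeasure d = 0 := by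
  rw [uniformSphereMeasure, h, ENNReal.inv_top, zero_smul]

lemma isProbabilityMeasure_uniformSphereMeasure (h0 : μH[(d : ℝ)] 𝕊[d] ≠ 0)
    (htop : μH[(d : ℝ)] 𝕊[d] ≠ ⊤) : IsProbabilityMeasure (uniformSphereMeasure d) :=
  ⟨by rw [uniformSphereMeasure_apply MeasurableSet.univ, Set.univ_inter,
    ENNReal.inv_mul_cancel h0 htop]⟩

lemma ae_mem_sphere_uniformSphereMeasure : ∀ᵐ z ∂(uniformSphereMeasure d), z ∈ 𝕊[d] :=
  Measure.ae_smul_measure (ae_restrict_mem Metric.isClosed_sphere.measurableSet) _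

lemma map_uniformSphereMeasure
    (f : EuclideanSpace ℝ (Fin (d + 1)) ≃ₗᵢ[ℝ] EuclideanSpace ℝ (Fin (d + 1))) :
    (uniformSphereMeasure d).map f = uniformSphereMeasure d := by
  have hS : f ⁻¹' 𝕊[d] = 𝕊[d] := by ext z; simp
  have hμH : (μH[(d : ℝ)]).map f = μH[(d : ℝ)] := f.toIsometryEquiv.map_hausdorffMeasure _
  have hrestrict := f.toMeasurableEquiv.measurableEmbedding.restrict_map μH[(d : ℝ)] 𝕊[d]
  rw [LinearIsometryEquiv.coe_toMeasurableEquiv, hS, hμH] at hrestrict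
  rw [uniformSphereMeasure, Measure.map_smul, ← hrestrict]

lemma integral_comp_norm_sub_eq_of_mem_sphere (ψ : ℝ → ℝ)
    {x y : EuclideanSpace ℝ (Fin (d + 1))} (hx : x ∈ 𝕊[d]) (hy : y ∈ 𝕊[d]) :
    ∫ z, ψ ‖x - z‖ ∂(uniformSphereMeasure d) = ∫ z, ψ ‖y - z‖ ∂(uniformSphereMeasure d) := by
  rw [mem_sphere_zero_iff_norm] at hx hy
  set f := Submodule.reflection (ℝ ∙ (y - x))ᗮ
  have hfy : f y = x := Submodule.reflection_sub (hy.trans hx.symm)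
  calc ∫ z, ψ ‖x - z‖ ∂(uniformSphereMeasure d)
      = ∫ z, ψ ‖x - z‖ ∂((uniformSphereMeasure d).map f.toMeasurableEquiv) := by
        rw [LinearIsometryEquiv.coe_toMeasurableEquiv, map_uniformSphereMeasure]
    _ = ∫ z, ψ ‖y - z‖ ∂(uniformSphereMeasure d) := by
      rw [integral_map_equiv, ← hfy]
      simp only [LinearIsometryEquiv.coe_toMeasurableEquiv, ← f.map_sub, f.norm_map]

end UniformSphereMeasure

section Cap

lemma norm_single_one_sub_sq {ι : Type*} [Fintype ι] [DecidableEq ι] (i : ι)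
    {z : EuclideanSpace ℝ ι} (hz : ‖z‖ = 1) :
    ‖EuclideanSpace.single i (1 : ℝ) - z‖ ^ 2 = 2 - 2 * z i := by
  rw [norm_sub_sq_real, EuclideanSpace.inner_single_left, PiLp.norm_single, hz]
  simp only [norm_one, map_one]
  ring

lemma norm_toLp_cons_sq {n : ℕ} (a : ℝ) (w : Fin n → ℝ) :
    ‖WithLp.toLp 2 (Fin.cons a w : Fin (n + 1) → ℝ)‖ ^ 2 = a ^ 2 + ‖WithLp.toLp 2 w‖ ^ 2 := by
  simp [EuclideanSpace.norm_sq_eq, Fin.sum_univ_succ]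

lemma norm_toLp_sq_le {n : ℕ} (w : Fin n → ℝ) : ‖WithLp.toLp 2 w‖ ^ 2 ≤ n * ‖w‖ ^ 2 := by
  rw [EuclideanSpace.norm_sq_eq]
  calc ∑ i, ‖w i‖ ^ 2 ≤ ∑ _i : Fin n, ‖w‖ ^ 2 :=
        Finset.sum_le_sum fun i _ => pow_le_pow_left₀ (norm_nonneg _) (norm_le_pi_norm w i) 2
    _ = n * ‖w‖ ^ 2 := by simp

lemma lipschitzWith_one_tail {n : ℕ} :
    LipschitzWith 1 fun z : EuclideanSpace ℝ (Fin (n + 1)) => Fin.tail (WithLp.ofLp z) := by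
  have htail : LipschitzWith 1 (Fin.tail : (Fin (n + 1) → ℝ) → Fin n → ℝ) :=
    LipschitzWith.of_dist_le_mul fun a b => by
      rw [NNReal.coe_one, one_mul]
      exact (dist_pi_le_iff dist_nonneg).2 fun i => dist_le_pi_dist a b i.succ
  have h := htail.comp (PiLp.lipschitzWith_ofLp 2 fun _ : Fin (n + 1) => ℝ)
  rw [one_mul] at h
  exact h

lemma exists_mem_sphere_tail_eq {d : ℕ} (w : Fin d → ℝ) (hw : ‖WithLp.toLp 2 w‖ ≤ 1) :
    ∃ z ∈ 𝕊[d], Fin.tail (WithLp.ofLp z) = w ∧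
      ‖EuclideanSpace.single 0 (1 : ℝ) - z‖ ^ 2 ≤ 2 * ‖WithLp.toLp 2 w‖ ^ 2 := by
  set s := ‖WithLp.toLp 2 w‖
  have hs : 0 ≤ 1 - s ^ 2 := by nlinarith [norm_nonneg (WithLp.toLp 2 w)]
  set z := WithLp.toLp 2 (Fin.cons √(1 - s ^ 2) w : Fin (d + 1) → ℝ)
  have hz : ‖z‖ = 1 := by
    rw [← Real.sqrt_sq (norm_nonneg z), norm_toLp_cons_sq, Real.sq_sqrt hs, sub_add_cancel,
      Real.sqrt_one]
  refine ⟨z, mem_sphere_zero_iff_norm.2 hz, rfl, ?_⟩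
  rw [norm_single_one_sub_sq _ hz]
  have : 1 - s ^ 2 ≤ √(1 - s ^ 2) := Real.le_sqrt_of_sq_le (by nlinarith)
  simp only [z, Fin.cons_zero]
  linarith

lemma volume_ball_le_hausdorffMeasure_ball_inter_sphere {d : ℕ} (hd : 1 ≤ d) {r : ℝ}
    (hr : r ≤ 1) :
    volume (Metric.ball (0 : Fin d → ℝ) (r / √(2 * d))) ≤
      μH[(d : ℝ)] (Metric.ball (EuclideanSpace.single 0 1) r ∩ 𝕊[d]) := by
  have h2d : 0 < 2 * (d : ℝ) := by positivity
  have hsub : Metric.ball (0 : Fin d → ℝ) (r / √(2 * d)) ⊆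
      (fun z : EuclideanSpace ℝ (Fin (d + 1)) => Fin.tail (WithLp.ofLp z)) ''
        (Metric.ball (EuclideanSpace.single 0 1) r ∩ 𝕊[d]) := by
    intro w hw
    rw [mem_ball_zero_iff] at hw
    have hr₀ : 0 < r := (div_pos_iff_of_pos_right (by positivity)).1 ((norm_nonneg w).trans_lt hw)
    have hws : 2 * ‖WithLp.toLp 2 w‖ ^ 2 < r ^ 2 := by
      have hw2 := pow_lt_pow_left₀ hw (norm_nonneg w) two_ne_zero
      rw [div_pow, Real.sq_sqrt h2d.le, lt_div_iff₀ h2d] at hw2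
      nlinarith [norm_toLp_sq_le w]
    obtain ⟨z, hz, htail, hchord⟩ :=
      exists_mem_sphere_tail_eq w (by nlinarith [norm_nonneg (WithLp.toLp 2 w)])
    refine ⟨z, ⟨?_, hz⟩, htail⟩
    rw [Metric.mem_ball, dist_comm, dist_eq_norm]
    exact lt_of_pow_lt_pow_left₀ 2 hr₀.le (hchord.trans_lt hws)
  have hvolume : (μH[(d : ℝ)] : Measure (Fin d → ℝ)) = volume := by
    simpa using hausdorffMeasure_pi_real (ι := Fin d)
  calc volume (Metric.ball (0 : Fin d → ℝ) (r / √(2 * d)))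
      = μH[(d : ℝ)] (Metric.ball (0 : Fin d → ℝ) (r / √(2 * d))) := by rw [hvolume]
    _ ≤ μH[(d : ℝ)] ((fun z : EuclideanSpace ℝ (Fin (d + 1)) => Fin.tail (WithLp.ofLp z)) ''
          (Metric.ball (EuclideanSpace.single 0 1) r ∩ 𝕊[d])) := measure_mono hsub
    _ ≤ μH[(d : ℝ)] (Metric.ball (EuclideanSpace.single 0 1) r ∩ 𝕊[d]) := by
      simpa using lipschitzWith_one_tail.hausdorffMeasure_image_le d.cast_nonneg _

variable {d : ℕ}

lemma hausdorffMeasure_sphere_ne_zero (hd : 1 ≤ d) : μH[(d : ℝ)] 𝕊[d] ≠ 0 := by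
  have hd' : (0 : ℝ) < d := by exact_mod_cast hd
  have hpos : 0 < volume (Metric.ball (0 : Fin d → ℝ) (1 / √(2 * d))) :=
    Metric.measure_ball_pos _ _ (by positivity)
  exact (hpos.trans_le ((volume_ball_le_hausdorffMeasure_ball_inter_sphere hd le_rfl).trans
    (measure_mono Set.inter_subset_right))).ne'

lemma exists_mul_pow_le_measureReal_ball (hd : 1 ≤ d) (htop : μH[(d : ℝ)] 𝕊[d] ≠ ⊤) :
    ∃ c > 0, ∀ r ∈ Set.Ioc (0 : ℝ) 1,
      c * r ^ d ≤ (uniformSphereMeasure d).real (Metric.ball (EuclideanSpace.single 0 1) r) := by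
  have hd' : (0 : ℝ) < d := by exact_mod_cast hd
  set ω := μH[(d : ℝ)] 𝕊[d]
  have hω : 0 < ω.toReal := ENNReal.toReal_pos (hausdorffMeasure_sphere_ne_zero hd) htop
  refine ⟨(2 / √(2 * d)) ^ d / ω.toReal, by positivity, fun r ⟨hr₀, hr₁⟩ => ?_⟩
  have hcap := volume_ball_le_hausdorffMeasure_ball_inter_sphere hd hr₁
  rw [Real.volume_pi_ball _ (by positivity), Fintype.card_fin] at hcap
  calc (2 / √(2 * d)) ^ d / ω.toReal * r ^ d = ω.toReal⁻¹ * (2 * (r / √(2 * d))) ^ d := by ring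
    _ ≤ ω.toReal⁻¹ * (μH[(d : ℝ)] (Metric.ball (EuclideanSpace.single 0 1) r ∩ 𝕊[d])).toReal := by
      gcongr
      exact (ENNReal.ofReal_le_iff_le_toReal
        ((measure_mono Set.inter_subset_right).trans_lt htop.lt_top).ne).1 hcap
    _ = (uniformSphereMeasure d).real (Metric.ball (EuclideanSpace.single 0 1) r) := by
      rw [measureReal_def, uniformSphereMeasure_apply measurableSet_ball, ENNReal.toReal_mul,
        ENNReal.toReal_inv]

end Cap

section ZonalKernel

variable {d : ℕ} {φ : ℝ → ℝ} {ρ : ℝ}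

/-- The normalising constant `Λ_{φ,ρ}`, evaluated at the north pole. -/
noncomputable def zonalKernelMass (d : ℕ) (φ : ℝ → ℝ) (ρ : ℝ) : ℝ :=
  ∫ z, φ (‖EuclideanSpace.single 0 1 - z‖ / ρ) ∂(uniformSphereMeasure d)

lemma single_zero_one_mem_sphere : EuclideanSpace.single 0 (1 : ℝ) ∈ 𝕊[d] := by
  rw [mem_sphere_zero_iff_norm, PiLp.norm_single, norm_one]

lemma integral_eq_zonalKernelMass (φ : ℝ → ℝ) (ρ : ℝ) {x : EuclideanSpace ℝ (Fin (d + 1))}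
    (hx : x ∈ 𝕊[d]) : ∫ z, φ (‖x - z‖ / ρ) ∂(uniformSphereMeasure d) = zonalKernelMass d φ ρ :=
  integral_comp_norm_sub_eq_of_mem_sphere (fun t => φ (t / ρ)) hx single_zero_one_mem_sphere

lemma scaledZonalKernel_of_mem_sphere {x y : EuclideanSpace ℝ (Fin (d + 1))} (hy : y ∈ 𝕊[d]) :
    scaledZonalKernel d φ ρ y x = φ (‖x - y‖ / ρ) / zonalKernelMass d φ ρ := by
  rw [scaledZonalKernel, integral_eq_zonalKernelMass φ ρ hy, norm_sub_rev]

lemma memLp_comp_norm_sub_div {E : Type*} [NormedAddCommGroup E] [MeasurableSpace E]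
    [OpensMeasurableSpace E] {μ : Measure E} [IsFiniteMeasure μ] (hφ_cont : Continuous φ)
    (hφ_nonneg : ∀ z, 0 ≤ z → 0 ≤ φ z) {B : ℝ} (hB : ∀ z, 0 ≤ z → φ z ≤ B) (hρ : 0 ≤ ρ)
    (x : E) (p : ℝ≥0∞) : MemLp (fun z => φ (‖x - z‖ / ρ)) p μ :=
  MemLp.of_bound (hφ_cont.comp (by fun_prop)).aestronglyMeasurable B <| .of_forall fun z => by
    rw [Real.norm_of_nonneg (hφ_nonneg _ (by positivity))]
    exact hB _ (by positivity)

lemma memLp_scaledZonalKernel [IsFiniteMeasure (uniformSphereMeasure d)] (hφ_cont : Continuous φ)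
    (hφ_nonneg : ∀ z, 0 ≤ z → 0 ≤ φ z) {B : ℝ} (hB : ∀ z, 0 ≤ z → φ z ≤ B) (hρ : 0 ≤ ρ)
    (x : EuclideanSpace ℝ (Fin (d + 1))) (p : ℝ≥0∞) :
    MemLp (fun y => scaledZonalKernel d φ ρ y x) p (uniformSphereMeasure d) := by
  refine ((memLp_comp_norm_sub_div hφ_cont hφ_nonneg hB hρ x p).const_mul
    (zonalKernelMass d φ ρ)⁻¹).ae_eq ?_
  filter_upwards [ae_mem_sphere_uniformSphereMeasure] with y hy
  rw [scaledZonalKernel_of_mem_sphere hy, inv_mul_eq_div]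

lemma integral_scaledZonalKernel_sq_le [IsFiniteMeasure (uniformSphereMeasure d)]
    (hφ_cont : Continuous φ) (hφ_nonneg : ∀ z, 0 ≤ z → 0 ≤ φ z) {B : ℝ}
    (hB : ∀ z, 0 ≤ z → φ z ≤ B) (hρ : 0 ≤ ρ) {x : EuclideanSpace ℝ (Fin (d + 1))} (hx : x ∈ 𝕊[d]) :
    ∫ y, scaledZonalKernel d φ ρ y x ^ 2 ∂(uniformSphereMeasure d) ≤ B / zonalKernelMass d φ ρ := by
  set Λ := zonalKernelMass d φ ρ
  have hsq : ∀ᵐ y ∂(uniformSphereMeasure d),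
      scaledZonalKernel d φ ρ y x ^ 2 ≤ B / Λ ^ 2 * φ (‖x - y‖ / ρ) := by
    filter_upwards [ae_mem_sphere_uniformSphereMeasure] with y hy
    have h0 := hφ_nonneg (‖x - y‖ / ρ) (by positivity)
    rw [scaledZonalKernel_of_mem_sphere hy, div_pow, sq, div_mul_eq_mul_div]
    gcongr
    exact hB _ (by positivity)
  calc ∫ y, scaledZonalKernel d φ ρ y x ^ 2 ∂(uniformSphereMeasure d)
      ≤ ∫ y, B / Λ ^ 2 * φ (‖x - y‖ / ρ) ∂(uniformSphereMeasure d) :=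
        integral_mono_of_nonneg (.of_forall fun y => sq_nonneg _)
          (((memLp_comp_norm_sub_div hφ_cont hφ_nonneg hB hρ x 1).integrable le_rfl).const_mul _)
          hsq
    _ = B / Λ ^ 2 * Λ := by rw [integral_const_mul, integral_eq_zonalKernelMass φ ρ hx]
    _ = B / Λ := by
      rcases eq_or_ne Λ 0 with hΛ | hΛ
      · simp [hΛ]
      · field_simp

lemma sum_integral_inv_mul_scaledZonalKernel_sq_le [IsFiniteMeasure (uniformSphereMeasure d)]
    (hφ_cont : Continuous φ) (hφ_nonneg : ∀ z, 0 ≤ z → 0 ≤ φ z) {B : ℝ}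
    (hB : ∀ z, 0 ≤ z → φ z ≤ B) (hρ : 0 ≤ ρ) {N : ℕ} {x : Fin N → EuclideanSpace ℝ (Fin (d + 1))}
    (hx : ∀ j, x j ∈ 𝕊[d]) :
    ∑ j, ∫ y, ((N : ℝ)⁻¹ * scaledZonalKernel d φ ρ y (x j)) ^ 2 ∂(uniformSphereMeasure d) ≤
      B / (zonalKernelMass d φ ρ * N) := by
  calc ∑ j, ∫ y, ((N : ℝ)⁻¹ * scaledZonalKernel d φ ρ y (x j)) ^ 2 ∂(uniformSphereMeasure d)
      = ∑ j, (N : ℝ)⁻¹ ^ 2 *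
          ∫ y, scaledZonalKernel d φ ρ y (x j) ^ 2 ∂(uniformSphereMeasure d) := by
        simp only [mul_pow, integral_const_mul]
    _ ≤ ∑ _j : Fin N, (N : ℝ)⁻¹ ^ 2 * (B / zonalKernelMass d φ ρ) := by
        gcongr with j
        exact integral_scaledZonalKernel_sq_le hφ_cont hφ_nonneg hB hρ (hx j)
    _ = B / (zonalKernelMass d φ ρ * N) := by
        rw [Finset.sum_const, Finset.card_univ, Fintype.card_fin, nsmul_eq_mul]
        rcases eq_or_ne (N : ℝ) 0 with hN | hN
        · simp [hN]
        · field_simp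

end ZonalKernel

lemma exists_mem_sphere_norm_sub_eq {E : Type*} [NormedAddCommGroup E] [NormedSpace ℝ E]
    (hE : 1 < Module.rank ℝ E) {e : E} (he : ‖e‖ = 1) {t : ℝ} (ht₀ : 0 ≤ t) (ht₂ : t ≤ 2) :
    ∃ x ∈ Metric.sphere (0 : E) 1, ‖x - e‖ = t := by
  have hIcc := (isConnected_sphere hE 0 zero_le_one).isPreconnected.intermediate_value
    (a := e) (b := -e) (by simpa using he) (by simpa using he)
    (f := fun x => ‖x - e‖) (by fun_prop)
  have h2 : ‖-e - e‖ = 2 := by rw [← neg_add', norm_neg, ← two_smul ℝ, norm_smul, he]; norm_num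
  simpa [h2] using hIcc ⟨by simpa using ht₀, ht₂.trans h2.ge⟩

section LowerBound

variable {d : ℕ}

lemma one_lt_rank_euclideanSpace (hd : 1 ≤ d) :
    1 < Module.rank ℝ (EuclideanSpace ℝ (Fin (d + 1))) := by
  rw [← Module.finrank_eq_rank, finrank_euclideanSpace, Fintype.card_fin]
  exact_mod_cast Nat.lt_succ_of_le hd

lemma exists_mul_pow_le_zonalKernelMass (hd : 1 ≤ d) (htop : μH[(d : ℝ)] 𝕊[d] ≠ ⊤)
    {φ : ℝ → ℝ} (hφ_cont : Continuous φ) (hφ_nonneg : ∀ z, 0 ≤ z → 0 ≤ φ z) {B : ℝ}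
    (hB : ∀ z, 0 ≤ z → φ z ≤ B) {z₀ : ℝ} (hz₀ : 0 ≤ z₀) (hφz₀ : 0 < φ z₀) :
    ∃ ρ₀ ∈ Set.Ioo (0 : ℝ) 1, ∃ c > 0, ∀ ρ ∈ Set.Ioo 0 ρ₀, c * ρ ^ d ≤ zonalKernelMass d φ ρ := by
  have := isProbabilityMeasure_uniformSphereMeasure (hausdorffMeasure_sphere_ne_zero hd) htop
  set e₀ : EuclideanSpace ℝ (Fin (d + 1)) := EuclideanSpace.single 0 1
  obtain ⟨ε, hε, hφε⟩ := Metric.eventually_nhds_iff.1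
    (hφ_cont.continuousAt.eventually (lt_mem_nhds (half_lt_self hφz₀)))
  obtain ⟨κ, hκ, hcap⟩ := exists_mul_pow_le_measureReal_ball hd htop
  refine ⟨min (1 / 2) (1 / (z₀ + ε)), ⟨by positivity, (min_le_left _ _).trans_lt (by norm_num)⟩,
    φ z₀ / 2 * κ * ε ^ d, by positivity, fun ρ ⟨hρ, hρ₀⟩ => ?_⟩
  have hρε : ρ * (z₀ + ε) < 1 := by
    have := hρ₀.trans_le (min_le_right _ _)
    rwa [lt_div_iff₀ (by positivity)] at this
  obtain ⟨x, hx, hxe⟩ := exists_mem_sphere_norm_sub_eq (one_lt_rank_euclideanSpace hd)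
    (mem_sphere_zero_iff_norm.1 single_zero_one_mem_sphere) (t := z₀ * ρ) (by positivity)
    (by nlinarith)
  have hint : Integrable (fun z => φ (‖x - z‖ / ρ)) (uniformSphereMeasure d) :=
    (memLp_comp_norm_sub_div hφ_cont hφ_nonneg hB hρ.le x 1).integrable le_rfl
  have hcap_le : ∀ z ∈ Metric.ball e₀ (ε * ρ), φ z₀ / 2 ≤ φ (‖x - z‖ / ρ) := by
    intro z hz
    have hdist : |‖x - z‖ - z₀ * ρ| < ε * ρ := by
      rw [← hxe]
      refine (abs_norm_sub_norm_le _ _).trans_lt ?_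
      rwa [sub_sub_sub_cancel_left, ← dist_eq_norm, dist_comm]
    refine (hφε ?_).le
    rwa [Real.dist_eq, show ‖x - z‖ / ρ - z₀ = (‖x - z‖ - z₀ * ρ) / ρ by field_simp, abs_div,
      abs_of_pos hρ, div_lt_iff₀ hρ]
  calc φ z₀ / 2 * κ * ε ^ d * ρ ^ d = φ z₀ / 2 * (κ * (ε * ρ) ^ d) := by ring
    _ ≤ φ z₀ / 2 * (uniformSphereMeasure d).real (Metric.ball e₀ (ε * ρ)) := by
        gcongr
        exact hcap _ ⟨by positivity, by nlinarith⟩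
    _ ≤ ∫ z in Metric.ball e₀ (ε * ρ), φ (‖x - z‖ / ρ) ∂(uniformSphereMeasure d) :=
        setIntegral_ge_of_const_le_real measurableSet_ball (measure_ne_top _ _) hcap_le
          hint.integrableOn
    _ ≤ ∫ z, φ (‖x - z‖ / ρ) ∂(uniformSphereMeasure d) :=
        setIntegral_le_integral hint (.of_forall fun z => hφ_nonneg _ (by positivity))
    _ = zonalKernelMass d φ ρ := integral_eq_zonalKernelMass φ ρ hx

end LowerBound

lemma sqrt_div_pow_mul_eq {a ρ n : ℝ} (ha : 0 ≤ a) (hρ : 0 ≤ ρ) (hn : 0 ≤ n) (d : ℕ) :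
    √(a / (ρ ^ d * n)) = √a * ρ ^ (-(d : ℝ) / 2) * n ^ (-(1 : ℝ) / 2) := by
  have hrpow : ∀ {x : ℝ}, 0 ≤ x → ∀ k : ℕ, x ^ (-(k : ℝ) / 2) = (√(x ^ k))⁻¹ := fun hx k => by
    rw [Real.sqrt_eq_rpow, ← Real.rpow_natCast, ← Real.rpow_mul hx, neg_div, Real.rpow_neg hx,
      div_eq_mul_one_div]
  rw [hrpow hρ, ← Nat.cast_one, hrpow hn, pow_one, Real.sqrt_div ha, Real.sqrt_mul (by positivity),
    div_eq_mul_inv, mul_inv, mul_assoc]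

theorem noise_quasi_interpolant_mean_l2_bound_general (d : ℕ) (hd : 1 ≤ d)
    (φ : ℝ → ℝ) (hφ_cont : Continuous φ) (hφ_nonneg : ∀ z, 0 ≤ z → 0 ≤ φ z)
    (hφ_bdd : ∃ B : ℝ, ∀ z, 0 ≤ z → φ z ≤ B)
    (hφ_ne : ∃ z, 0 ≤ z ∧ φ z ≠ 0) :
    ∃ ρ₀ ∈ Set.Ioo (0 : ℝ) 1, ∃ C > (0 : ℝ),
      ∀ ρ ∈ Set.Ioo (0 : ℝ) ρ₀, ∀ N : ℕ, 1 ≤ N →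
        ∀ x : Fin N → EuclideanSpace ℝ (Fin (d + 1)),
          (∀ j, x j ∈ Metric.sphere (0 : EuclideanSpace ℝ (Fin (d + 1))) 1) →
          ∀ M > (0 : ℝ),
            ∀ (Ω : Type) [MeasurableSpace Ω] (P : Measure Ω) [IsProbabilityMeasure P]
              (ε : Fin N → Ω → ℝ),
              (∀ j, Measurable (ε j)) →
              iIndepFun ε P →
              (∀ j, ∫ w, ε j w ∂P = 0) →
              (∀ j, ∀ᵐ w ∂P, |ε j w| ≤ M) →
              (∫ w, Real.sqrt (∫ y,
                  ((N : ℝ)⁻¹ * ∑ j, ε j w * scaledZonalKernel d φ ρ y (x j)) ^ 2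
                  ∂(uniformSphereMeasure d)) ∂P) ≤
                C * ρ ^ (-(d : ℝ) / 2) * (N : ℝ) ^ (-(1 : ℝ) / 2) * M := by
  by_cases htop : μH[(d : ℝ)] 𝕊[d] = ⊤
  · -- then `ν = 0` (as `⊤⁻¹ = 0`) and the left-hand side vanishes
    refine ⟨1 / 2, by norm_num, 1, one_pos, fun ρ hρ N _ x _ M hM Ω _ P _ ε _ _ _ _ => ?_⟩
    simp only [uniformSphereMeasure_eq_zero_of_hausdorffMeasure_eq_top htop,
      integral_zero_measure, Real.sqrt_zero, integral_zero]
    have := hρ.1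
    positivity
  have := isProbabilityMeasure_uniformSphereMeasure (hausdorffMeasure_sphere_ne_zero hd) htop
  obtain ⟨B, hB⟩ := hφ_bdd
  obtain ⟨z₀, hz₀, hφz₀⟩ := hφ_ne
  have hφz₀ : 0 < φ z₀ := (hφ_nonneg z₀ hz₀).lt_of_ne' hφz₀
  obtain ⟨ρ₀, hρ₀, c, hc, hΛ⟩ :=
    exists_mul_pow_le_zonalKernelMass hd htop hφ_cont hφ_nonneg hB hz₀ hφz₀
  have hB₀ : 0 < B := hφz₀.trans_le (hB z₀ hz₀)
  refine ⟨ρ₀, hρ₀, √(B / c), by positivity,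
    fun ρ hρ N hN x hx M hM Ω _ P _ ε hmeas hindep hmean hbdd => ?_⟩
  have hρ_pos := hρ.1
  have hN : (0 : ℝ) < N := by exact_mod_cast hN
  calc ∫ w, √(∫ y, ((N : ℝ)⁻¹ * ∑ j, ε j w * scaledZonalKernel d φ ρ y (x j)) ^ 2
        ∂(uniformSphereMeasure d)) ∂P
      = ∫ w, √(∫ y, (∑ j, ε j w * ((N : ℝ)⁻¹ * scaledZonalKernel d φ ρ y (x j))) ^ 2
        ∂(uniformSphereMeasure d)) ∂P := by
        simp only [Finset.mul_sum, mul_left_comm]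
    _ ≤ M * √(∑ j, ∫ y, ((N : ℝ)⁻¹ * scaledZonalKernel d φ ρ y (x j)) ^ 2
        ∂(uniformSphereMeasure d)) :=
        integral_sqrt_integral_sq_sum_le (fun j =>
          (memLp_scaledZonalKernel hφ_cont hφ_nonneg hB hρ_pos.le (x j) 2).const_mul _)
          hmeas hindep hmean hM.le hbdd
    _ ≤ M * √(B / c / (ρ ^ d * N)) := by
        gcongr
        refine (sum_integral_inv_mul_scaledZonalKernel_sq_le hφ_cont hφ_nonneg hB hρ_pos.le
          hx).trans ?_
        rw [div_div, ← mul_assoc]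
        gcongr
        exact hΛ ρ hρ
    _ = √(B / c) * ρ ^ (-(d : ℝ) / 2) * (N : ℝ) ^ (-(1 : ℝ) / 2) * M := by
        rw [sqrt_div_pow_mul_eq (by positivity) hρ_pos.le hN.le, mul_comm]

/-- **Mean `L²(ν)` bound for the noise part of the quasi-interpolant.**
Under the scaled-kernel assumptions there exist `ρ₀ ∈ (0,1)` and `C > 0`, depending only on
`d` and `φ`, such that for every `ρ ∈ (0, ρ₀)`, every `N ≥ 1`, every choice of points
`x 1, ..., x N ∈ S^d`, and every `M > 0`: if `ε 1, ..., ε N` are independent real random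
variables with `E[ε j] = 0` and `|ε j| ≤ M` almost surely, then
`E[ ‖(1/N) Σ_j ε_j φ_ρ(·, x_j)‖_{L²(ν)} ] ≤ C ρ^{-d/2} N^{-1/2} M`. -/
theorem noise_quasi_interpolant_mean_l2_bound (d : ℕ) (hd : 1 ≤ d)
    (φ : ℝ → ℝ) (hφ_cont : Continuous φ) (hφ_nonneg : ∀ z, 0 ≤ z → 0 ≤ φ z)
    (hφ_bdd : ∃ B : ℝ, ∀ z, 0 ≤ z → φ z ≤ B)
    (hφ_ne : ∃ z, 0 ≤ z ∧ φ z ≠ 0)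
    (hφ_int : IntegrableOn (fun z => φ z * z ^ d) (Set.Ioi (0 : ℝ))) :
    ∃ ρ₀ ∈ Set.Ioo (0 : ℝ) 1, ∃ C > (0 : ℝ),
      ∀ ρ ∈ Set.Ioo (0 : ℝ) ρ₀, ∀ N : ℕ, 1 ≤ N →
        ∀ x : Fin N → EuclideanSpace ℝ (Fin (d + 1)),
          (∀ j, x j ∈ Metric.sphere (0 : EuclideanSpace ℝ (Fin (d + 1))) 1) →
          ∀ M > (0 : ℝ),
            ∀ (Ω : Type) [MeasurableSpace Ω] (P : Measure Ω) [IsProbabilityMeasure P]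
              (ε : Fin N → Ω → ℝ),
              (∀ j, Measurable (ε j)) →
              iIndepFun ε P →
              (∀ j, ∫ w, ε j w ∂P = 0) →
              (∀ j, ∀ᵐ w ∂P, |ε j w| ≤ M) →
              (∫ w, Real.sqrt (∫ y,
                  ((N : ℝ)⁻¹ * ∑ j, ε j w * scaledZonalKernel d φ ρ y (x j)) ^ 2
                  ∂(uniformSphereMeasure d)) ∂P) ≤
                C * ρ ^ (-(d : ℝ) / 2) * (N : ℝ) ^ (-(1 : ℝ) / 2) * M :=
  noise_quasi_interpolant_mean_l2_bound_general d hd φ hφ_cont hφ_nonneg hφ_bdd hφ_ne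
end
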